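/- arXiv:2210.06042 — 4 statements merged into one kernel-verified Lean document; each statement's English description precedes it below -/
import Mathlib

section
/- (Lemma 1) Let S be an independent set in the proximity graph G. Then the beam placement problem P1 has an optimal solution in which each user of S is assigned to a distinct beam; more precisely, the optimal value of P1 equals the optimal value of the restricted problem P2 in which each user in S is pre-assigned to its own dedicated beam. In particular OPT(P1) = OPT(P2). -/
/-- Feasibility for the beam placement problem `P1`: each user is assigned to
exactly one beam (C1), users are only assigned to active beams (C2), two users
sharing a beam must be adjacent in the proximity graph `G` (C3), and each beam
serves at most `W` users (C4). -/
def BPFeasible {N B : ℕ} (G : SimpleGraph (Fin N)) (W : ℕ)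
    (z : Fin B → Bool) (a : Fin N → Fin B → Bool) : Prop :=
  (∀ i, ∃! b, a i b = true) ∧
  (∀ i b, a i b = true → z b = true) ∧
  (∀ i j b, i ≠ j → ¬ G.Adj i j → ¬ (a i b = true ∧ a j b = true)) ∧
  (∀ b, (Finset.univ.filter fun i => a i b = true).card ≤ W)

/-- The objective of `P1`: the number of active beams. -/
def BPObj {B : ℕ} (z : Fin B → Bool) : ℕ :=
  (Finset.univ.filter fun b => z b = true).card

/-- The optimal value of `P1`. -/
noncomputable def OptP1 (N B : ℕ) (G : SimpleGraph (Fin N)) (W : ℕ) : ℕ :=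
  sInf {v | ∃ (z : Fin B → Bool) (a : Fin N → Fin B → Bool),
    BPFeasible G W z a ∧ v = BPObj z}

/-- The optimal value of `P2`: `P1` with each user `i` of the independent set
`S` pre-assigned to its own dedicated beam `β i`. -/
noncomputable def OptP2 (N B : ℕ) (G : SimpleGraph (Fin N)) (W : ℕ)
    (S : Finset (Fin N)) (β : Fin N → Fin B) : ℕ :=
  sInf {v | ∃ (z : Fin B → Bool) (a : Fin N → Fin B → Bool),
    BPFeasible G W z a ∧ (∀ i ∈ S, a i (β i) = true) ∧ v = BPObj z}

/-- Any `P1`-feasible solution can be turned into a `P2`-feasible one with the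
same objective, by permuting the beams. -/
lemma exists_p2_of_p1 {N B : ℕ} (G : SimpleGraph (Fin N)) (W : ℕ)
    (S : Finset (Fin N)) (hS : (S : Set (Fin N)).Pairwise fun u v => ¬ G.Adj u v)
    (β : Fin N → Fin B) (hβ : Set.InjOn β S)
    (z : Fin B → Bool) (a : Fin N → Fin B → Bool) (hfeas : BPFeasible G W z a) :
    ∃ z' a', BPFeasible G W z' a' ∧ (∀ i ∈ S, a' i (β i) = true) ∧
      BPObj z' = BPObj z := by
  classical
  obtain ⟨h1, h2, h3, h4⟩ := hfeas
  choose bm hbm hbmu using h1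
  -- the beams of users in `S` are pairwise distinct
  have hbminj : Set.InjOn bm S := by
    intro i hi j hj hij
    by_contra hne
    exact h3 i j (bm i) hne (hS hi hj hne) ⟨hbm i, hij ▸ hbm j⟩
  set s : Finset (Fin B) := S.image bm with hs
  let f : Fin B → Fin B := fun b => if h : ∃ i, i ∈ S ∧ bm i = b then β h.choose else b
  have hf : ∀ i ∈ S, f (bm i) = β i := by
    intro i hi
    have h : ∃ j, j ∈ S ∧ bm j = bm i := ⟨i, hi, rfl⟩
    have hcs := h.choose_spec
    have : h.choose = i := hbminj hcs.1 hi hcs.2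
    simp only [f, dif_pos h, this]
  have hfinj : Set.InjOn f ↑s := by
    intro b1 hb1 b2 hb2 hfb
    simp only [hs, Finset.coe_image, Set.mem_image, Finset.mem_coe] at hb1 hb2
    obtain ⟨i, hi, rfl⟩ := hb1
    obtain ⟨j, hj, rfl⟩ := hb2
    rw [hf i hi, hf j hj] at hfb
    exact congrArg bm (hβ hi hj hfb)
  have hαt : Fintype.card (Fin B) = (Finset.univ : Finset (Fin B)).card :=
    Finset.card_univ.symm
  obtain ⟨g, hg⟩ := Set.MapsTo.exists_equiv_extend_of_card_eq (s := (↑s : Set (Fin B)))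
    (f := f) hαt (fun x _ => Finset.mem_univ (f x)) hfinj
  let σ : Equiv.Perm (Fin B) := g.trans (Equiv.subtypeUnivEquiv fun b => Finset.mem_univ b)
  have hσ : ∀ i ∈ S, σ (bm i) = β i := by
    intro i hi
    have hmem : bm i ∈ (↑s : Set (Fin B)) := by
      simp [hs, Finset.coe_image]; exact ⟨i, hi, rfl⟩
    have := hg (bm i) hmem
    simpa [σ, Equiv.subtypeUnivEquiv, hf i hi] using this.trans (hf i hi)
  refine ⟨fun b => z (σ.symm b), fun i b => a i (σ.symm b), ⟨?_, ?_, ?_, ?_⟩, ?_, ?_⟩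
  · intro i
    refine ⟨σ (bm i), by simp [hbm i], fun b hb => ?_⟩
    have := hbmu i _ hb
    rw [Equiv.symm_apply_eq] at this
    exact this
  · intro i b hab
    exact h2 i (σ.symm b) hab
  · intro i j b hne hadj
    exact h3 i j (σ.symm b) hne hadj
  · intro b
    exact h4 (σ.symm b)
  · intro i hi
    have : σ.symm (β i) = bm i := by
      rw [Equiv.symm_apply_eq, hσ i hi]
    show a i (σ.symm (β i)) = true
    rw [this]
    exact hbm i
  · unfold BPObj
    have himg : (Finset.univ.filter fun b => z (σ.symm b) = true) =
        (Finset.univ.filter fun b => z b = true).image σ := by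
      ext b
      simp only [Finset.mem_filter, Finset.mem_univ, true_and, Finset.mem_image]
      constructor
      · intro hb
        exact ⟨σ.symm b, hb, Equiv.apply_symm_apply σ b⟩
      · rintro ⟨c, hc, rfl⟩
        simpa using hc
    rw [himg, Finset.card_image_of_injective _ σ.injective]

/-- Lemma 1: if `S` is an independent set of the proximity graph `G` and each
user of `S` is pre-assigned to its own distinct beam `β i`, the optimal value
is unchanged: `OPT(P1) = OPT(P2)`. -/
theorem optP1_eq_optP2 (N B W : ℕ) (G : SimpleGraph (Fin N))
    (hB : N ≤ B) (hW : 1 ≤ W)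
    (S : Finset (Fin N)) (hS : (S : Set (Fin N)).Pairwise fun u v => ¬ G.Adj u v)
    (β : Fin N → Fin B) (hβ : Set.InjOn β S) :
    OptP1 N B G W = OptP2 N B G W S β := by
  classical
  -- a trivial feasible solution to `P1`
  have htriv : BPFeasible G W (fun _ => true)
      (fun i b => decide (Fin.castLE hB i = b)) := by
    refine ⟨fun i => ⟨Fin.castLE hB i, by simp, fun b hb => ?_⟩, fun _ _ _ => rfl,
      ?_, ?_⟩
    · simpa using (of_decide_eq_true hb).symm
    · intro i j b hne _ ⟨hi, hj⟩
      have hi' := of_decide_eq_true hi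
      have hj' := of_decide_eq_true hj
      exact hne (by
        apply Fin.ext
        have : (Fin.castLE hB i : Fin B).val = (Fin.castLE hB j : Fin B).val := by
          rw [hi', hj']
        simpa using this)
    · intro b
      refine le_trans (Finset.card_le_one.mpr ?_) hW
      intro i hi j hj
      simp only [Finset.mem_filter, decide_eq_true_eq] at hi hj
      apply Fin.ext
      have : (Fin.castLE hB i : Fin B).val = (Fin.castLE hB j : Fin B).val := by
        rw [hi.2, hj.2]
      simpa using this
  obtain ⟨z₂, a₂, hfeas₂, hpre₂, hobj₂⟩ :=
    exists_p2_of_p1 G W S hS β hβ _ _ htriv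
  have hne2 : {v | ∃ (z : Fin B → Bool) (a : Fin N → Fin B → Bool),
      BPFeasible G W z a ∧ (∀ i ∈ S, a i (β i) = true) ∧ v = BPObj z}.Nonempty :=
    ⟨BPObj z₂, z₂, a₂, hfeas₂, hpre₂, rfl⟩
  have hne1 : {v | ∃ (z : Fin B → Bool) (a : Fin N → Fin B → Bool),
      BPFeasible G W z a ∧ v = BPObj z}.Nonempty :=
    ⟨BPObj z₂, z₂, a₂, hfeas₂, rfl⟩
  apply le_antisymm
  · -- OptP1 ≤ OptP2 : P2's feasible set is a subset of P1's
    obtain ⟨z, a, hfeas, _, hval⟩ := Nat.sInf_mem hne2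
    exact Nat.sInf_le ⟨z, a, hfeas, hval⟩
  · -- OptP2 ≤ OptP1 : transform an optimal P1 solution
    obtain ⟨z, a, hfeas, hval⟩ := Nat.sInf_mem hne1
    obtain ⟨z', a', hfeas', hpre', hobj'⟩ :=
      exists_p2_of_p1 G W S hS β hβ z a hfeas
    exact Nat.sInf_le ⟨z', a', hfeas', hpre', hval.trans hobj'.symm⟩
end

section
/- Let OPT(P2') be the optimal value of the linear relaxation of P2 (where binary variables are relaxed to [0,1]). Then OPT(P2') ≤ OPT(P2) = OPT(P1). -/
lemma exists_perm_comp_eq {α β : Type*} [Fintype α] [Fintype β] [DecidableEq β]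
    (f g : α → β) (hf : Function.Injective f) (hg : Function.Injective g) :
    ∃ σ : Equiv.Perm β, ∀ x, σ (f x) = g x := by
  classical
  have hcard : Fintype.card ↥(Set.range f)ᶜ = Fintype.card ↥(Set.range g)ᶜ := by
    rw [Fintype.card_compl_set, Fintype.card_compl_set,
      Set.card_range_of_injective hf, Set.card_range_of_injective hg]
  let φ : ↥(Set.range f) ≃ ↥(Set.range g) :=
    (Equiv.ofInjective f hf).symm.trans (Equiv.ofInjective g hg)
  let ψ : ↥(Set.range f)ᶜ ≃ ↥(Set.range g)ᶜ := Fintype.equivOfCardEq hcard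
  refine ⟨(Equiv.sumCompl (· ∈ Set.range f)).symm.trans
    ((φ.sumCongr ψ).trans (Equiv.sumCompl (· ∈ Set.range g))), ?_⟩
  intro x
  have h1 : (Equiv.sumCompl (· ∈ Set.range f)).symm (f x) = Sum.inl ⟨f x, ⟨x, rfl⟩⟩ :=
    Equiv.sumCompl_symm_apply_of_pos ⟨x, rfl⟩
  rw [Equiv.trans_apply, Equiv.trans_apply, h1]
  have h2 : ((Equiv.ofInjective f hf).symm ⟨f x, ⟨x, rfl⟩⟩) = x := by
    have h3 : (⟨f x, ⟨x, rfl⟩⟩ : ↥(Set.range f)) = Equiv.ofInjective f hf x :=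
      Subtype.ext rfl
    rw [h3, Equiv.symm_apply_apply]
  show (Equiv.sumCompl (· ∈ Set.range g)) ((φ.sumCongr ψ) (Sum.inl ⟨f x, ⟨x, rfl⟩⟩)) = g x
  rw [Equiv.sumCongr_apply, Sum.map_inl, Equiv.sumCompl_apply_inl]
  show ((Equiv.ofInjective g hg) ((Equiv.ofInjective f hf).symm ⟨f x, ⟨x, rfl⟩⟩) : β) = g x
  rw [h2, Equiv.ofInjective_apply]


/-- Feasibility for the linear relaxation: all binary variables are relaxed to
the interval `[0,1]`, and the constraints C1–C4 of `P1` are kept. -/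
def LPFeasible {N B : ℕ} (G : SimpleGraph (Fin N)) (W : ℕ)
    (z : Fin B → ℝ) (a : Fin N → Fin B → ℝ) : Prop :=
  (∀ b, 0 ≤ z b ∧ z b ≤ 1) ∧
  (∀ i b, 0 ≤ a i b ∧ a i b ≤ 1) ∧
  (∀ i, ∑ b, a i b = 1) ∧
  (∀ i b, a i b ≤ z b) ∧
  (∀ i j b, i ≠ j → ¬ G.Adj i j → a i b + a j b ≤ 1) ∧
  (∀ b, ∑ i, a i b ≤ (W : ℝ))

/-- The optimal value of `P2'`, the linear relaxation of `P2` (users of the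
independent set `S` pre-assigned: `a i (β i) = 1` for `i ∈ S`). -/
noncomputable def OptP2LP (N B : ℕ) (G : SimpleGraph (Fin N)) (W : ℕ)
    (S : Finset (Fin N)) (β : Fin N → Fin B) : ℝ :=
  sInf {v : ℝ | ∃ (z : Fin B → ℝ) (a : Fin N → Fin B → ℝ),
    LPFeasible G W z a ∧ (∀ i ∈ S, a i (β i) = 1) ∧ v = ∑ b, z b}

/-- `OPT(P2') ≤ OPT(P2) = OPT(P1)`: the optimal value of the linear relaxation
of `P2` lower-bounds the common optimal value of `P2` and `P1`. -/
theorem optP2LP_le_optP2_eq_optP1 (N B W : ℕ) (G : SimpleGraph (Fin N))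
    (hB : N ≤ B) (hW : 1 ≤ W)
    (S : Finset (Fin N)) (hS : (S : Set (Fin N)).Pairwise fun u v => ¬ G.Adj u v)
    (β : Fin N → Fin B) (hβ : Set.InjOn β S) :
    OptP2LP N B G W S β ≤ (OptP2 N B G W S β : ℝ) ∧
      OptP2 N B G W S β = OptP1 N B G W := by
    classical
  -- Step A: an injective γ : Fin N → Fin B agreeing with β on S
  have hι : Function.Injective (Fin.castLE hB) := Fin.castLE_injective hB
  have hβ' : Function.Injective (fun i : ↥(S : Set (Fin N)) => β i.1) :=
    fun x y h => Subtype.ext (hβ x.2 y.2 h)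
  obtain ⟨σ0, hσ0⟩ := exists_perm_comp_eq
    (fun i : ↥(S : Set (Fin N)) => Fin.castLE hB i.1) (fun i => β i.1)
    (fun x y h => Subtype.ext (hι h)) hβ'
  set γ : Fin N → Fin B := fun i => σ0 (Fin.castLE hB i) with hγdef
  have hγinj : Function.Injective γ := fun x y h => hι (σ0.injective h)
  have hγβ : ∀ i ∈ S, γ i = β i := fun i hi => hσ0 ⟨i, hi⟩
  -- Step B: a P2-feasible point
  set z0 : Fin B → Bool := fun b => decide (∃ i, γ i = b) with hz0
  set a0 : Fin N → Fin B → Bool := fun i b => decide (b = γ i) with ha0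
  have hfeas0 : BPFeasible G W z0 a0 := by
    refine ⟨?_, ?_, ?_, ?_⟩
    · intro i
      exact ⟨γ i, by simp [a0], fun y hy => by simpa [a0] using hy⟩
    · intro i b hb
      simp only [a0, decide_eq_true_eq] at hb
      simp only [z0, decide_eq_true_eq]
      exact ⟨i, hb.symm⟩
    · rintro i j b hij _ ⟨h1, h2⟩
      simp only [a0, decide_eq_true_eq] at h1 h2
      exact hij (hγinj (h1.symm.trans h2))
    · intro b
      refine le_trans (Finset.card_le_one.mpr ?_) hW
      intro x hx y hy
      simp only [a0, Finset.mem_filter, decide_eq_true_eq] at hx hy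
      exact hγinj (hx.2.symm.trans hy.2)
  have hpre0 : ∀ i ∈ S, a0 i (β i) = true := by
    intro i hi
    simp only [a0, decide_eq_true_eq]
    exact (hγβ i hi).symm
  have hP2ne : {v | ∃ (z : Fin B → Bool) (a : Fin N → Fin B → Bool),
      BPFeasible G W z a ∧ (∀ i ∈ S, a i (β i) = true) ∧ v = BPObj z}.Nonempty :=
    ⟨BPObj z0, z0, a0, hfeas0, hpre0, rfl⟩
  -- P2 optimum is attained
  obtain ⟨z1, a1, hfeas1, hpre1, hval1⟩ := Nat.sInf_mem hP2ne
  -- OptP1 ≤ OptP2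
  have hP1le : OptP1 N B G W ≤ OptP2 N B G W S β :=
    Nat.sInf_le ⟨z1, a1, hfeas1, hval1⟩
  -- P1 optimum is attained
  have hP1ne : {v | ∃ (z : Fin B → Bool) (a : Fin N → Fin B → Bool),
      BPFeasible G W z a ∧ v = BPObj z}.Nonempty :=
    ⟨BPObj z0, z0, a0, hfeas0, rfl⟩
  obtain ⟨z2, a2, hfeas2, hval2⟩ := Nat.sInf_mem hP1ne
  -- beam map of the P1 optimal solution
  set bmap : Fin N → Fin B := fun i => Classical.choose (hfeas2.1 i) with hbmapdef
  have hbmap : ∀ i, a2 i (bmap i) = true := fun i => (Classical.choose_spec (hfeas2.1 i)).1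
  have hbuniq : ∀ i b, a2 i b = true → b = bmap i :=
    fun i b h => (Classical.choose_spec (hfeas2.1 i)).2 b h
  have hbinj : Function.Injective (fun i : ↥(S : Set (Fin N)) => bmap i.1) := by
    intro x y h
    by_contra hne
    have hxy : x.1 ≠ y.1 := fun h' => hne (Subtype.ext h')
    have hnadj : ¬ G.Adj x.1 y.1 := hS x.2 y.2 hxy
    exact hfeas2.2.2.1 x.1 y.1 (bmap x.1) hxy hnadj ⟨hbmap x.1, by have h' : bmap x.1 = bmap y.1 := h; rw [h']; exact hbmap y.1⟩
  obtain ⟨σ, hσ⟩ := exists_perm_comp_eq (fun i : ↥(S : Set (Fin N)) => bmap i.1)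
    (fun i => β i.1) hbinj hβ'
  set z3 : Fin B → Bool := fun b => z2 (σ.symm b) with hz3
  set a3 : Fin N → Fin B → Bool := fun i b => a2 i (σ.symm b) with ha3
  have hfeas3 : BPFeasible G W z3 a3 := by
    refine ⟨?_, ?_, ?_, ?_⟩
    · intro i
      refine ⟨σ (bmap i), ?_, ?_⟩
      · show a2 i (σ.symm (σ (bmap i))) = true
        rw [Equiv.symm_apply_apply]; exact hbmap i
      · intro y hy
        have := hbuniq i _ hy
        rw [Equiv.symm_apply_eq] at this
        exact this
    · intro i b hb
      exact hfeas2.2.1 i (σ.symm b) hb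
    · intro i j b hij hnadj
      exact hfeas2.2.2.1 i j (σ.symm b) hij hnadj
    · intro b
      exact hfeas2.2.2.2 (σ.symm b)
  have hpre3 : ∀ i ∈ S, a3 i (β i) = true := by
    intro i hi
    have h1 : σ (bmap i) = β i := hσ ⟨i, hi⟩
    show a2 i (σ.symm (β i)) = true
    rw [← h1, Equiv.symm_apply_apply]
    exact hbmap i
  have hobj3 : BPObj z3 = BPObj z2 := by
    unfold BPObj
    exact Finset.card_equiv σ.symm (fun b => by simp [z3])
  have hP2le : OptP2 N B G W S β ≤ OptP1 N B G W := by
    refine Nat.sInf_le ⟨z3, a3, hfeas3, hpre3, ?_⟩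
    show OptP1 N B G W = BPObj z3
    rw [hobj3]
    exact hval2
  have heq : OptP2 N B G W S β = OptP1 N B G W := le_antisymm hP2le hP1le
  refine ⟨?_, heq⟩
  -- LP bound
  set zr : Fin B → ℝ := fun b => if z1 b = true then 1 else 0 with hzr
  set ar : Fin N → Fin B → ℝ := fun i b => if a1 i b = true then 1 else 0 with har
  have hlp : LPFeasible G W zr ar := by
    refine ⟨?_, ?_, ?_, ?_, ?_, ?_⟩
    · intro b; constructor <;> simp [zr] <;> split <;> norm_num
    · intro i b; constructor <;> simp [ar] <;> split <;> norm_num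
    · intro i
      rw [show (∑ b, ar i b) = ((Finset.univ.filter fun b => a1 i b = true).card : ℝ)
        from Finset.sum_boole _ _]
      obtain ⟨b0, hb0, hb0u⟩ := hfeas1.1 i
      have hfil : (Finset.univ.filter fun b => a1 i b = true) = {b0} := by
        ext b
        simp only [Finset.mem_filter, Finset.mem_univ, true_and, Finset.mem_singleton]
        exact ⟨fun h => hb0u b h, fun h => h ▸ hb0⟩
      rw [hfil]; simp
    · intro i b
      simp only [ar, zr]
      split
      · rw [if_pos (hfeas1.2.1 i b (by assumption))]
      · split <;> norm_num
    · intro i j b hij hnadj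
      have := hfeas1.2.2.1 i j b hij hnadj
      simp only [ar]
      split <;> split <;> norm_num
      exact this ⟨by assumption, by assumption⟩
    · intro b
      rw [show (∑ i, ar i b) = ((Finset.univ.filter fun i => a1 i b = true).card : ℝ)
        from Finset.sum_boole _ _]
      exact_mod_cast hfeas1.2.2.2 b
  have hlppre : ∀ i ∈ S, ar i (β i) = 1 := by
    intro i hi
    simp only [ar]
    rw [if_pos (hpre1 i hi)]
  have hvalr : (∑ b, zr b) = ((BPObj z1 : ℕ) : ℝ) := by
    rw [show (∑ b, zr b) = ((Finset.univ.filter fun b => z1 b = true).card : ℝ)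
      from Finset.sum_boole _ _]
    rfl
  have hbdd : BddBelow {v : ℝ | ∃ (z : Fin B → ℝ) (a : Fin N → Fin B → ℝ),
      LPFeasible G W z a ∧ (∀ i ∈ S, a i (β i) = 1) ∧ v = ∑ b, z b} := by
    refine ⟨0, ?_⟩
    rintro v ⟨z, a, hf, _, rfl⟩
    exact Finset.sum_nonneg fun b _ => (hf.1 b).1
  have hmem : ((BPObj z1 : ℕ) : ℝ) ∈ {v : ℝ | ∃ (z : Fin B → ℝ) (a : Fin N → Fin B → ℝ),
      LPFeasible G W z a ∧ (∀ i ∈ S, a i (β i) = 1) ∧ v = ∑ b, z b} :=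
    ⟨zr, ar, hlp, hlppre, hvalr.symm⟩
  have hle := csInf_le hbdd hmem
  have h2 : OptP2 N B G W S β = BPObj z1 := hval1
  rw [h2]
  exact hle
end

section
/- Any optimal solution of the beam placement problem P1 activates at most N beams, and the set of user groups served by the active beams forms a partition of the users into cliques of G of size at most W; conversely any partition of the users into at most B cliques of size at most W yields a feasible solution whose objective equals the number of parts. Hence OPT(P1) equals the minimum number of parts in a partition of V(G) into cliques each of size at most W (when B ≥ N). -/
lemma card_filter_val_lt {B k : ℕ} (h : k ≤ B) :
    (Finset.univ.filter fun b : Fin B => (b : ℕ) < k).card = k := by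
  have : (Finset.univ.filter fun b : Fin B => (b : ℕ) < k) =
      Finset.map (Fin.castLEEmb h) Finset.univ := by
    ext b
    simp only [Finset.mem_filter, Finset.mem_univ, true_and, Finset.mem_map]
    constructor
    · intro hb
      exact ⟨⟨b, hb⟩, rfl⟩
    · rintro ⟨i, rfl⟩
      exact i.2
  rw [this, Finset.card_map, Finset.card_univ, Fintype.card_fin]


/-- From a partition into at most `B` cliques, build a feasible point with
objective `k`. -/
lemma part_to_feasible {N B W k : ℕ} (G : SimpleGraph (Fin N)) (hk : k ≤ B)
    (c : Fin N → Fin k)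
    (hc : ∀ t : Fin k, G.IsClique {i | c i = t} ∧
      (Finset.univ.filter fun i => c i = t).card ≤ W) :
    ∃ (z : Fin B → Bool) (a : Fin N → Fin B → Bool),
      BPFeasible G W z a ∧ BPObj z = k := by
  refine ⟨fun b => decide ((b : ℕ) < k),
    fun i b => decide (b = Fin.castLE hk (c i)), ⟨?_, ?_, ?_, ?_⟩, ?_⟩
  · intro i
    refine ⟨Fin.castLE hk (c i), by simp, fun b hb => by simpa using hb⟩
  · intro i b hb
    simp only [decide_eq_true_eq] at hb ⊢
    subst hb
    exact (c i).2
  · intro i j b hij hadj ⟨hi, hj⟩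
    simp only [decide_eq_true_eq] at hi hj
    have : c i = c j := Fin.castLE_injective hk (hi ▸ hj)
    exact hadj ((hc (c i)).1 (Set.mem_setOf.2 rfl) (Set.mem_setOf.2 this.symm) hij)
  · intro b
    by_cases hb : (b : ℕ) < k
    · have : (Finset.univ.filter fun i => decide (b = Fin.castLE hk (c i)) = true) =
          (Finset.univ.filter fun i => c i = ⟨b, hb⟩) := by
        apply Finset.filter_congr
        intro i _
        simp only [decide_eq_true_eq, eq_iff_iff]
        constructor
        · intro h; subst h; exact Fin.ext rfl
        · intro h; rw [h]; exact Fin.ext rfl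
      rw [this]
      exact (hc ⟨b, hb⟩).2
    · have : (Finset.univ.filter fun i => decide (b = Fin.castLE hk (c i)) = true) = ∅ := by
        apply Finset.filter_false_of_mem
        intro i _
        simp only [decide_eq_true_eq]
        intro h
        exact hb (h ▸ (c i).2)
      rw [this]
      simp
  · simp only [BPObj, decide_eq_true_eq]
    exact card_filter_val_lt hk

/-- From a feasible point, build a clique partition with `BPObj z` parts. -/
lemma feasible_to_part {N B W : ℕ} (G : SimpleGraph (Fin N))
    (z : Fin B → Bool) (a : Fin N → Fin B → Bool) (h : BPFeasible G W z a) :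
    ∃ c : Fin N → Fin (BPObj z), ∀ t,
      G.IsClique {i | c i = t} ∧
      (Finset.univ.filter fun i => c i = t).card ≤ W := by
  obtain ⟨h1, h2, h3, h4⟩ := h
  set T : Finset (Fin B) := Finset.univ.filter fun b => z b = true with hT
  have hcard : T.card = BPObj z := rfl
  let iso := T.orderIsoOfFin hcard
  choose f hf hfu using h1
  have hfT : ∀ i, f i ∈ T := fun i => by
    simp only [hT, Finset.mem_filter, Finset.mem_univ, true_and]
    exact h2 i (f i) (hf i)
  let c : Fin N → Fin (BPObj z) := fun i => iso.symm ⟨f i, hfT i⟩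
  have key : ∀ i t, c i = t ↔ a i ((iso t : T) : Fin B) = true := by
    intro i t
    constructor
    · intro hct
      have : f i = ((iso t : T) : Fin B) := by
        have := congrArg (fun x => ((iso x : T) : Fin B)) hct
        simpa [c] using this
      exact this ▸ hf i
    · intro hat
      have : ((iso t : T) : Fin B) = f i := hfu i _ hat
      simp only [c]
      rw [show (⟨f i, hfT i⟩ : T) = iso t from Subtype.ext this.symm]
      simp
  refine ⟨c, fun t => ⟨?_, ?_⟩⟩
  · intro i hi j hj hij
    by_contra hadj
    exact h3 i j ((iso t : T) : Fin B) hij hadj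
      ⟨(key i t).1 hi, (key j t).1 hj⟩
  · have : (Finset.univ.filter fun i => c i = t) =
        (Finset.univ.filter fun i => a i ((iso t : T) : Fin B) = true) :=
      Finset.filter_congr fun i _ => by simpa using key i t
    rw [this]
    exact h4 _

/-- When `B ≥ N`, the optimum of `P1` is at most `N` (so optimal solutions
activate at most `N` beams), and `OPT(P1)` equals the minimum number of parts
in a partition of the users into cliques of `G` each of size at most `W`. -/
theorem opt_eq_min_clique_partition (N B W : ℕ) (G : SimpleGraph (Fin N))
    (hB : N ≤ B) (hW : 1 ≤ W) :
    OptP1 N B G W ≤ N ∧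
    OptP1 N B G W =
      sInf {k : ℕ | ∃ c : Fin N → Fin k, ∀ t : Fin k,
        G.IsClique {i | c i = t} ∧
        (Finset.univ.filter fun i => c i = t).card ≤ W} := by

  have hNK : ∃ c : Fin N → Fin N, ∀ t : Fin N,
      G.IsClique {i | c i = t} ∧
      (Finset.univ.filter fun i => c i = t).card ≤ W := by
    refine ⟨id, fun t => ⟨?_, ?_⟩⟩
    · intro i hi j hj hij
      simp only [Set.mem_setOf_eq, id] at hi hj
      exact absurd (hi.trans hj.symm) hij
    · have : (Finset.univ.filter fun i : Fin N => id i = t) = {t} := by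
        ext i; simp [eq_comm]
      rw [this]
      simpa using hW
  have hNA : N ∈ {v | ∃ (z : Fin B → Bool) (a : Fin N → Fin B → Bool),
      BPFeasible G W z a ∧ v = BPObj z} := by
    obtain ⟨c, hc⟩ := hNK
    obtain ⟨z, a, hf, hobj⟩ := part_to_feasible G hB c hc
    exact ⟨z, a, hf, hobj.symm⟩
  have h1 : OptP1 N B G W ≤ N := Nat.sInf_le hNA
  have hAopt : OptP1 N B G W ∈ {v | ∃ (z : Fin B → Bool) (a : Fin N → Fin B → Bool),
      BPFeasible G W z a ∧ v = BPObj z} := Nat.sInf_mem ⟨N, hNA⟩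
  refine ⟨h1, le_antisymm ?_ ?_⟩
  · -- OptP1 ≤ sInf K
    have hNK' : N ∈ {k : ℕ | ∃ c : Fin N → Fin k, ∀ t : Fin k,
        G.IsClique {i | c i = t} ∧
        (Finset.univ.filter fun i => c i = t).card ≤ W} := hNK
    have hKopt := Nat.sInf_mem ⟨N, hNK'⟩
    have hkN : sInf {k : ℕ | ∃ c : Fin N → Fin k, ∀ t : Fin k,
        G.IsClique {i | c i = t} ∧
        (Finset.univ.filter fun i => c i = t).card ≤ W} ≤ N := Nat.sInf_le hNK'
    obtain ⟨c, hc⟩ := hKopt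
    obtain ⟨z, a, hf, hobj⟩ := part_to_feasible G (hkN.trans hB) c hc
    exact Nat.sInf_le ⟨z, a, hf, hobj.symm⟩
  · -- sInf K ≤ OptP1
    obtain ⟨z, a, hf, hv⟩ := hAopt
    obtain ⟨c, hc⟩ := feasible_to_part G z a hf
    rw [hv]
    exact Nat.sInf_le ⟨c, hc⟩
end

section
/- In any feasible solution of the beam placement problem, the number of active beams is at least the clique cover number of G restricted by capacity; in particular if the unassigned users after a partial assignment contain no clique of size greater than W, then the capacity constraints for the newly opened beams are implied by the exclusion constraints, so the slack variables for those beams can be eliminated without changing feasibility. -/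
/-- In any feasible solution of the beam placement problem the number of active
beams is at least the capacity-restricted clique cover number of `G`; moreover,
if every clique of the subgraph induced by the remaining (unassigned) users `R`
has size at most `W`, then any assignment `c` of the users of `R` to new beams
satisfying the pairwise-adjacency (exclusion) constraints automatically
satisfies the capacity constraints, so the corresponding slack variables can be
eliminated. -/
theorem active_beams_lower_bound_and_capacity_implied
    (N B W : ℕ) (G : SimpleGraph (Fin N)) :
    (∀ (z : Fin B → Bool) (a : Fin N → Fin B → Bool), BPFeasible G W z a →
      sInf {k : ℕ | ∃ c : Fin N → Fin k, ∀ t : Fin k,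
        G.IsClique {i | c i = t} ∧
        (Finset.univ.filter fun i => c i = t).card ≤ W} ≤ BPObj z) ∧
    (∀ (R : Finset (Fin N)),
      (∀ t : Finset (Fin N), t ⊆ R → G.IsClique (t : Set (Fin N)) → t.card ≤ W) →
      ∀ c : Fin N → Fin B,
        (∀ i ∈ R, ∀ j ∈ R, i ≠ j → c i = c j → G.Adj i j) →
        ∀ b : Fin B, (R.filter fun i => c i = b).card ≤ W) := by
  constructor
  · rintro z a ⟨h1, h2, h3, h4⟩
    apply Nat.sInf_le
    set F : Finset (Fin B) := Finset.univ.filter fun b => z b = true with hF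
    have e : F ≃ Fin (BPObj z) := F.equivFin
    have hf : ∀ i, a i ((h1 i).choose) = true := fun i => (h1 i).choose_spec.1
    have hmem : ∀ i, (h1 i).choose ∈ F := by
      intro i
      simp only [hF, Finset.mem_filter, Finset.mem_univ, true_and]
      exact h2 i _ (hf i)
    refine ⟨fun i => e ⟨(h1 i).choose, hmem i⟩, fun t => ⟨?_, ?_⟩⟩
    · intro i hi j hj hij
      simp only [Set.mem_setOf_eq] at hi hj
      have : (⟨(h1 i).choose, hmem i⟩ : F) = ⟨(h1 j).choose, hmem j⟩ :=
        e.injective (hi.trans hj.symm)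
      have hb : (h1 i).choose = (h1 j).choose := congrArg Subtype.val this
      by_contra hadj
      exact h3 i j (h1 i).choose hij hadj ⟨hf i, hb ▸ hf j⟩
    · have hsub : (Finset.univ.filter fun i => (e ⟨(h1 i).choose, hmem i⟩) = t) ⊆
          Finset.univ.filter fun i => a i ((e.symm t : F) : Fin B) = true := by
        intro i hi
        simp only [Finset.mem_filter, Finset.mem_univ, true_and] at hi ⊢
        have : (⟨(h1 i).choose, hmem i⟩ : F) = e.symm t := by
          rw [← hi]; exact (e.symm_apply_apply _).symm
        have hb : (h1 i).choose = ((e.symm t : F) : Fin B) := congrArg Subtype.val this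
        exact hb ▸ hf i
      exact le_trans (Finset.card_le_card hsub) (h4 _)
  · intro R hR c hc b
    apply hR _ (Finset.filter_subset _ _)
    intro i hi j hj hij
    simp only [Finset.coe_filter, Set.mem_setOf_eq] at hi hj
    exact hc i hi.1 j hj.1 hij (hi.2.trans hj.2.symm)
end
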